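/- Let n ≥ 5 be odd and consider the vectors of ℤⁿ: v_i = −e_{i−1} + 2e_i − e_{i+1} for 1 ≤ i ≤ n−3 (with e_0 = 0), v_{n−2} = −e_{n−3} + 2e_{n−2} − e_{n−1} − e_n, v_{n−1} = −e_{n−2} + 2e_{n−1}, and v_n = −e_{n−2} + 2e_n. Then the subgroup of ℤⁿ generated by v_1, …, v_n is exactly {(a_1, …, a_n) ∈ ℤⁿ : 2a_1 + 2a_3 + ⋯ + 2a_{n−2} + a_{n−1} − a_n ≡ 0 mod 4} (the first sum running over 2a_i for odd i ≤ n−2). -/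

import Mathlib

/-!
Let `F` be the functional `a ↦ 2a₁ + 2a₃ + ⋯ + 2a_{n-2} + a_{n-1} - a_n`. Each `vᵢ` has
`F vᵢ ∈ {0, ±4}`, so the lattice `G` they span lies in `{4 ∣ F}`. Conversely, write `xⱼ` for the
image of `eⱼ` in `ℤⁿ ⧸ G`. The relations `vᵢ = 0` along the chain make `xⱼ = j • x₁` for
`j ≤ n - 2`, and the three relations at the fork then give `2x₁ = 0`, `x₁ = -2x_{n-1}` and
`x_n = -x_{n-1}`. Hence `xⱼ = F(eⱼ) • x_{n-1}` for every `j` and `4x_{n-1} = 0`, so the quotient map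
is `a ↦ F(a) • x_{n-1}`, which vanishes when `4 ∣ F a`.
-/

/-- The standard basis vectors `e_1, …, e_n` of `ℤⁿ` (indexed `1`-based), with the
convention that `e_j = 0` for `j` outside `{1, …, n}` (in particular `e_0 = e_{n+1} = 0`). -/
def stdE (n j : ℕ) : Fin n → ℤ :=
  if h : 1 ≤ j ∧ j ≤ n then Pi.single (⟨j - 1, by omega⟩ : Fin n) 1 else 0

/-- Type `D_n` vectors: `v_i = -e_{i-1} + 2e_i - e_{i+1}` for `1 ≤ i ≤ n-3`,
`v_{n-2} = -e_{n-3} + 2e_{n-2} - e_{n-1} - e_n`, `v_{n-1} = -e_{n-2} + 2e_{n-1}`,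
and `v_n = -e_{n-2} + 2e_n`. -/
def vD (n i : ℕ) : Fin n → ℤ :=
  if i = n - 2 then -(stdE n (n - 3)) + 2 • stdE n (n - 2) - stdE n (n - 1) - stdE n n
  else if i = n - 1 then -(stdE n (n - 2)) + 2 • stdE n (n - 1)
  else if i = n then -(stdE n (n - 2)) + 2 • stdE n n
  else -(stdE n (i - 1)) + 2 • stdE n i - stdE n (i + 1)

lemma eq_intCast_smul_of_add_eq_two_smul {A : Type*} [AddCommGroup A] {x : ℕ → A} {m : ℕ}
    (h0 : x 0 = 0) (hrec : ∀ i < m, x (i + 2) + x i = (2 : ℤ) • x (i + 1)) :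
    ∀ j ≤ m + 1, x j = (j : ℤ) • x 1 := by
  suffices h : ∀ j ≤ m, x j = (j : ℤ) • x 1 ∧ x (j + 1) = ((j + 1 : ℕ) : ℤ) • x 1 by
    intro j hj
    rcases Nat.lt_or_ge j (m + 1) with hj' | hj'
    · exact (h j (by omega)).1
    · obtain rfl : j = m + 1 := by omega
      exact (h m le_rfl).2
  intro j hj
  induction j with
  | zero => simp [h0]
  | succ j ih =>
    obtain ⟨hj0, hj1⟩ := ih (by omega)
    refine ⟨hj1, ?_⟩
    have := hrec j (by omega)
    push_cast at hj0 hj1 ⊢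
    linear_combination (norm := module) this - hj0 + (2 : ℤ) • hj1

lemma AddMonoidHom.eq_smul_of_map_single {ι Q : Type*} [Fintype ι] [DecidableEq ι]
    [AddCommGroup Q] (F : (ι → ℤ) →+ ℤ) (π : (ι → ℤ) →+ Q) (q : Q)
    (h : ∀ i, π (Pi.single i 1) = F (Pi.single i 1) • q) (a : ι → ℤ) :
    π a = F a • q := by
  suffices π = (zmultiplesHom Q q).comp F from congr($this a)
  refine AddMonoidHom.functions_ext _ _ _ fun i x => ?_
  have hx : (Pi.single i x : ι → ℤ) = x • Pi.single i 1 := by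
    rw [← Pi.single_smul, smul_eq_mul, mul_one]
  rw [AddMonoidHom.comp_apply, zmultiplesHom_apply, hx, map_zsmul, map_zsmul, h, smul_eq_mul,
    mul_smul]

def dnForm (n : ℕ) (hn : 0 < n) : (Fin n → ℤ) →+ ℤ where
  toFun a := (∑ k ∈ Finset.univ.filter
      (fun k : Fin n => Odd ((k : ℕ) + 1) ∧ (k : ℕ) + 1 ≤ n - 2), 2 * a k)
      + a ⟨n - 2, by omega⟩ - a ⟨n - 1, by omega⟩
  map_zero' := by simp
  map_add' a b := by simp only [Pi.add_apply, mul_add, Finset.sum_add_distrib]; ring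

def dnWeight (n j : ℕ) : ℤ :=
  if j = n then -1 else if j = n - 1 then 1 else if Odd j then 2 else 0

lemma stdE_zero (n : ℕ) : stdE n 0 = 0 := by
  simp [stdE]

lemma stdE_succ {n : ℕ} (i : Fin n) : stdE n (i + 1) = Pi.single i 1 := by
  simp [stdE]

lemma dnForm_stdE {n j : ℕ} (hn : 2 ≤ n) (hj : j ≤ n) :
    dnForm n (by omega) (stdE n j) = dnWeight n j := by
  rcases Nat.eq_zero_or_pos j with rfl | hj0
  · simp [stdE_zero, dnWeight]; omega
  obtain ⟨i, rfl⟩ : ∃ i : Fin n, j = i + 1 := ⟨⟨j - 1, by omega⟩, by simp; omega⟩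
  simp only [stdE_succ, dnForm, AddMonoidHom.coe_mk, ZeroHom.coe_mk, ← Finset.mul_sum,
    Finset.sum_pi_single']
  simp only [Finset.mem_filter, Finset.mem_univ, true_and, Pi.single_apply, Fin.ext_iff, dnWeight]
  split_ifs <;> grind

lemma four_dvd_dnForm_vD {n i : ℕ} (hn : 5 ≤ n) (hodd : Odd n) (hi : i ∈ Set.Icc 1 n) :
    4 ∣ dnForm n (by omega) (vD n i) := by
  obtain ⟨hi1, hin⟩ := hi
  rw [Nat.odd_iff] at hodd
  unfold vD
  split_ifs <;>
    simp (disch := omega) only [map_add, map_sub, map_neg, map_nsmul, dnForm_stdE]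
  all_goals
    simp only [dnWeight, Nat.odd_iff, nsmul_eq_mul, Nat.cast_ofNat]
    split_ifs <;> omega

lemma map_stdE_eq_intCast_smul {Q : Type*} [AddCommGroup Q] {n : ℕ} (hn : 3 ≤ n)
    (π : (Fin n → ℤ) →+ Q) (hπ : ∀ i ∈ Set.Icc 1 (n - 3), π (vD n i) = 0) :
    ∀ j ≤ n - 2, π (stdE n j) = (j : ℤ) • π (stdE n 1) := by
  have hchain : ∀ i < n - 3,
      π (stdE n (i + 2)) + π (stdE n i) = (2 : ℤ) • π (stdE n (i + 1)) := by
    intro i hi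
    have h := hπ (i + 1) ⟨by omega, by omega⟩
    rw [vD, if_neg (by omega), if_neg (by omega), if_neg (by omega)] at h
    simp only [map_sub, map_add, map_neg, map_nsmul, Nat.add_sub_cancel] at h
    linear_combination (norm := module) -h
  intro j hj
  exact eq_intCast_smul_of_add_eq_two_smul (x := fun j => π (stdE n j))
    (by simp [stdE_zero]) hchain j (by omega)

lemma map_stdE_eq_dnWeight_smul {Q : Type*} [AddCommGroup Q] {n : ℕ} (hn : 5 ≤ n)
    (hodd : Odd n) (π : (Fin n → ℤ) →+ Q) (hπ : ∀ i ∈ Set.Icc 1 n, π (vD n i) = 0) :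
    (∀ j ≤ n, π (stdE n j) = dnWeight n j • π (stdE n (n - 1))) ∧
      (4 : ℤ) • π (stdE n (n - 1)) = 0 := by
  obtain ⟨k, hk⟩ := hodd
  have hap := map_stdE_eq_intCast_smul (by omega) π fun i hi =>
    hπ i ⟨hi.1, hi.2.trans (Nat.sub_le n 3)⟩
  set x : ℕ → Q := fun j => π (stdE n j)
  have hfork : -x (n - 3) + (2 : ℤ) • x (n - 2) - x (n - 1) - x n = 0 := by
    have h := hπ (n - 2) ⟨by omega, by omega⟩
    rw [vD, if_pos rfl] at h
    simp only [map_sub, map_add, map_neg, map_nsmul] at h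
    linear_combination (norm := module) h
  have hbranch₁ : -x (n - 2) + (2 : ℤ) • x (n - 1) = 0 := by
    have h := hπ (n - 1) ⟨by omega, by omega⟩
    rw [vD, if_neg (by omega), if_pos rfl] at h
    simp only [map_add, map_neg, map_nsmul] at h
    linear_combination (norm := module) h
  have hbranch₂ : -x (n - 2) + (2 : ℤ) • x n = 0 := by
    have h := hπ n ⟨by omega, le_rfl⟩
    rw [vD, if_neg (by omega), if_neg (by omega), if_pos rfl] at h
    simp only [map_add, map_neg, map_nsmul] at h
    linear_combination (norm := module) h
  have hx3 := hap (n - 3) (by omega)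
  have hx2 := hap (n - 2) le_rfl
  rw [show ((n - 3 : ℕ) : ℤ) = 2 * k - 2 by omega] at hx3
  rw [show ((n - 2 : ℕ) : ℤ) = 2 * k - 1 by omega] at hx2
  have h2x1 : (2 : ℤ) • x 1 = 0 := by
    linear_combination (norm := module)
      (2 : ℤ) • hfork + hbranch₁ + hbranch₂ + (2 : ℤ) • hx3 - (2 : ℤ) • hx2
  have hx1 : x 1 = -(2 : ℤ) • x (n - 1) := by
    linear_combination (norm := module) hbranch₁ + hx2 + (k : ℤ) • h2x1
  have hxn : x n = -x (n - 1) := by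
    linear_combination (norm := module) -hfork - hx3 + (2 : ℤ) • hx2 + (k : ℤ) • h2x1
  refine ⟨fun j hj => ?_, by linear_combination (norm := module) (2 : ℤ) • hx1 - h2x1⟩
  change x j = dnWeight n j • x (n - 1)
  unfold dnWeight
  split_ifs with hjn hjn1 hjodd
  · rw [hjn, hxn, neg_one_smul]
  · rw [hjn1, one_smul]
  · obtain ⟨t, rfl⟩ := hjodd
    have hxj := hap (2 * t + 1) (by omega)
    push_cast at hxj
    linear_combination (norm := module) hxj + ((t : ℤ) + 1) • h2x1 - hx1
  · obtain ⟨t, rfl⟩ := Nat.not_odd_iff_even.mp hjodd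
    have hxj := hap (t + t) (by omega)
    push_cast at hxj
    linear_combination (norm := module) hxj + (t : ℤ) • h2x1

theorem stmt_15 (n : ℕ) (hn : 5 ≤ n) (hodd : Odd n) :
    ∀ a : Fin n → ℤ,
      a ∈ AddSubgroup.closure (vD n '' Set.Icc 1 n) ↔
        (4 : ℤ) ∣
          ((∑ k ∈ Finset.univ.filter
              (fun k : Fin n => Odd ((k : ℕ) + 1) ∧ (k : ℕ) + 1 ≤ n - 2), 2 * a k)
            + a ⟨n - 2, by omega⟩ - a ⟨n - 1, by omega⟩) := by
  intro a
  set G := AddSubgroup.closure (vD n '' Set.Icc 1 n)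
  change a ∈ G ↔ 4 ∣ dnForm n (by omega) a
  constructor
  · intro ha
    have hle : G ≤ (AddSubgroup.zmultiples (4 : ℤ)).comap (dnForm n (by omega)) := by
      rw [AddSubgroup.closure_le]
      rintro _ ⟨i, hi, rfl⟩
      exact Int.mem_zmultiples_iff.mpr (four_dvd_dnForm_vD hn hodd hi)
    exact Int.mem_zmultiples_iff.mp (hle ha)
  · rintro ⟨d, hd⟩
    obtain ⟨hweight, hfour⟩ := map_stdE_eq_dnWeight_smul hn hodd (QuotientAddGroup.mk' G)
      fun i hi => (QuotientAddGroup.eq_zero_iff _).mpr (AddSubgroup.subset_closure ⟨i, hi, rfl⟩)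
    rw [← QuotientAddGroup.eq_zero_iff, ← QuotientAddGroup.mk'_apply,
      (dnForm n (by omega)).eq_smul_of_map_single _ _ (fun i => ?_) a, hd, mul_comm, mul_smul,
      hfour, smul_zero]
    rw [← stdE_succ, hweight _ i.isLt, dnForm_stdE (by omega) i.isLt]
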